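/- For every finite digraph D with root r, every ⊆-maximal r-flame subgraph F* of D satisfies λ_{F*}(r,v) = λ_D(r,v) for all v ∈ V−r. -/

import Mathlib

attribute [local instance] Classical.propDecidable

/-- A finite digraph: edges `E` with tail and head maps (parallel edges allowed). -/
structure Digraph' (V E : Type) where
  tail : E → V
  head : E → V

namespace Digraph'

variable {V E : Type} [Fintype V] [Fintype E]

/-- `es` is a directed walk from `r` to `v`. -/
def IsWalk (D : Digraph' V E) : V → V → List E → Prop
  | r, v, [] => r = v
  | r, v, e :: es => D.tail e = r ∧ D.IsWalk (D.head e) v es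

/-- `es` is a directed path from `r` to `v` using only edges of `F`. -/
def IsPathIn (D : Digraph' V E) (F : Set E) (r v : V) (es : List E) : Prop :=
  D.IsWalk r v es ∧ (∀ e ∈ es, e ∈ F) ∧ (r :: es.map D.head).Nodup

/-- The members of a list of paths are pairwise edge-disjoint. -/
def EdgeDisjoint (P : List (List E)) : Prop :=
  P.Pairwise (fun p q => ∀ e, e ∈ p → e ∉ q)

/-- The maximum number of pairwise edge-disjoint `r → v` paths inside `F`. -/
noncomputable def lam (D : Digraph' V E) (F : Set E) (r v : V) : ℕ :=
  sSup {k | ∃ P : List (List E), P.length = k ∧ (∀ p ∈ P, D.IsPathIn F r v p) ∧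
    EdgeDisjoint P}

/-- The set of edges of `F` whose head is `v`. -/
def inEdges (D : Digraph' V E) (F : Set E) (v : V) : Set E := {e ∈ F | D.head e = v}

/-- The in-degree of `v` in the subgraph `F`. -/
noncomputable def indeg (D : Digraph' V E) (F : Set E) (v : V) : ℕ :=
  (D.inEdges F v).ncard

/-- `I` arises as the set of last edges of a system of pairwise edge-disjoint
`r → v` paths in `F` (membership in the gammoid `G_F(v)`). -/
def InGammoid (D : Digraph' V E) (F : Set E) (r v : V) (I : Set E) : Prop :=
  ∃ P : List (List E), (∀ p ∈ P, D.IsPathIn F r v p) ∧ EdgeDisjoint P ∧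
    I = {e | ∃ p ∈ P, p.getLast? = some e}

/-- `F` is an `r`-flame: the in-degree of each `v ≠ r` equals λ_F(r,v). -/
def IsFlame (D : Digraph' V E) (r : V) (F : Set E) : Prop :=
  ∀ v, v ≠ r → D.indeg F v = D.lam F r v

/-- Total of `x` on the in-edges of `v`. -/
noncomputable def inflow (D : Digraph' V E) (x : E → ℝ) (v : V) : ℝ :=
  ∑ e, if D.head e = v then x e else 0

/-- Total of `x` on the out-edges of `v`. -/
noncomputable def outflow (D : Digraph' V E) (x : E → ℝ) (v : V) : ℝ :=
  ∑ e, if D.tail e = v then x e else 0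

/-- Total of `x` on the edges entering the vertex set `W`. -/
noncomputable def rhoSet (D : Digraph' V E) (x : E → ℝ) (W : Set V) : ℝ :=
  ∑ e, if D.head e ∈ W ∧ D.tail e ∉ W then x e else 0

/-- `x` is a (nonnegative) `r → v` flow. -/
def IsFlow (D : Digraph' V E) (r v : V) (x : E → ℝ) : Prop :=
  (∀ e, 0 ≤ x e) ∧ (∀ u, u ≠ r → u ≠ v → D.inflow x u = D.outflow x u) ∧
    D.inflow x r = 0 ∧ D.outflow x v = 0

/-- The flow-connectivity from `r` to `v` under capacity `c`. -/
noncomputable def lamF (D : Digraph' V E) (r v : V) (c : E → ℝ) : ℝ :=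
  sSup {a | ∃ x, D.IsFlow r v x ∧ x ≤ c ∧ D.outflow x r = a}

/-- Characteristic vector of an edge. -/
noncomputable def chi (e : E) : E → ℝ := fun e' => if e' = e then 1 else 0

/-- Restriction of `x` to the in-edges of `v` (zero elsewhere). -/
noncomputable def restrictIn (D : Digraph' V E) (v : V) (x : E → ℝ) : E → ℝ :=
  fun e => if D.head e = v then x e else 0

/-- The polygammoid `G_c(v)`: restrictions to the in-edges of `v`
of `r → v` flows bounded by `c`. -/
def polygammoid (D : Digraph' V E) (r v : V) (c : E → ℝ) : Set (E → ℝ) :=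
  {s | ∃ x, D.IsFlow r v x ∧ x ≤ c ∧ D.restrictIn v x = s}

/-- `D` has no parallel edges. -/
def NoParallel (D : Digraph' V E) : Prop :=
  ∀ e e', D.tail e = D.tail e' → D.head e = D.head e' → e = e'

/-- `es` is a directed cycle. -/
def IsCycle (D : Digraph' V E) (es : List E) : Prop :=
  es ≠ [] ∧ ∃ u, D.IsWalk u u es ∧ (es.map D.head).Nodup

/-- Characteristic vector of a list of edges. -/
noncomputable def charVec (es : List E) : E → ℝ :=
  fun e => ((es.filter (fun e' => e' = e)).length : ℝ)

end Digraph'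

/-!
Let `G ⊇ F*` be a minimal edge set with `λ_G(r, ·) = λ_D(r, ·)`. By Lovász's deletion lemma
(Menger's theorem plus uncrossing of minimum cuts), deleting an edge `e` from `G` without lowering
`λ(r, head e)` lowers no connectivity at all; so by minimality every `e ∈ G \ F*` is critical for
its head. Then `G` is a flame: a maximum flow into `t` obtained by augmenting one that uses every
edge of the flame `F*` into `t` must use every edge of `G` into `t`, since an unused one would not
be critical. Maximality of `F*` forces `G = F*`.

Menger's theorem is proved with `0/1`-flows and augmenting paths in the residual digraph.
-/

namespace Digraph'

open Finset

variable {V E : Type} {D : Digraph' V E}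

section Walks

variable (D) in
theorem isWalk_append {x y : V} (es₁ es₂ : List E) :
    D.IsWalk x y (es₁ ++ es₂) ↔ ∃ m, D.IsWalk x m es₁ ∧ D.IsWalk m y es₂ := by
  induction es₁ generalizing x with
  | nil => simp [IsWalk]
  | cons e es ih => simp [IsWalk, ih, and_assoc]

theorem IsWalk.snoc {x y : V} {es : List E} {s : E} (h : D.IsWalk x y es)
    (hs : D.tail s = y) : D.IsWalk x (D.head s) (es ++ [s]) :=
  (D.isWalk_append es [s]).2 ⟨y, h, hs, rfl⟩

theorem IsWalk.end_mem {x y : V} {es : List E} (h : D.IsWalk x y es) :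
    y ∈ x :: es.map D.head := by
  induction es generalizing x with
  | nil => exact List.mem_singleton.2 h.symm
  | cons e es ih => exact List.mem_cons_of_mem _ (ih h.2)

theorem IsWalk.tail_ne_of_nodup {x y : V} {es : List E} (h : D.IsWalk x y es)
    (hnd : (x :: es.map D.head).Nodup) : ∀ s ∈ es, D.tail s ≠ y := by
  induction es generalizing x with
  | nil => simp
  | cons e es ih =>
    obtain ⟨rfl, hw⟩ := h
    intro s hs
    rcases List.mem_cons.1 hs with rfl | hs
    · rintro rfl
      exact (List.nodup_cons.1 hnd).1 (by simpa using hw.end_mem)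
    · exact ih hw (List.nodup_cons.1 hnd).2 s hs

theorem exists_path_of_isWalk {x y : V} {es : List E} (h : D.IsWalk x y es) :
    ∃ es', D.IsWalk x y es' ∧ es' ⊆ es ∧ (x :: es'.map D.head).Nodup := by
  induction es generalizing x with
  | nil => exact ⟨[], h, List.nil_subset _, by simp⟩
  | cons e es ih =>
    obtain ⟨rfl, hw⟩ := h
    obtain ⟨es', hw', hsub, hnd⟩ := ih hw
    by_cases hmem : D.tail e ∈ D.head e :: es'.map D.head
    · -- the path from `head e` revisits `tail e`: cut off the loop
      rcases List.mem_cons.1 hmem with heq | hmem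
      · exact ⟨es', heq ▸ hw', fun g hg => List.mem_cons_of_mem _ (hsub hg), heq ▸ hnd⟩
      · obtain ⟨f, hf, hfx⟩ := List.mem_map.1 hmem
        obtain ⟨xs, ys, rfl⟩ := List.append_of_mem hf
        obtain ⟨m, -, hys⟩ := (D.isWalk_append xs (f :: ys)).1 hw'
        have hnd' : ((D.head e :: xs.map D.head) ++ (D.head f :: ys.map D.head)).Nodup := by
          simpa using hnd
        refine ⟨ys, hfx ▸ hys.2, ?_, hfx ▸ hnd'.of_append_right⟩
        exact fun g hg => List.mem_cons_of_mem _ (hsub (by simp [hg]))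
    · exact ⟨e :: es', ⟨rfl, hw'⟩, List.cons_subset_cons _ hsub, List.nodup_cons.2 ⟨hmem, hnd⟩⟩

end Walks

section Connectivity

theorem IsPathIn.nodup {F : Set E} {r v : V} {es : List E} (h : D.IsPathIn F r v es) :
    es.Nodup :=
  h.2.2.of_cons.of_map _

theorem IsPathIn.mono {F G : Set E} (hFG : F ⊆ G) {r v : V} {es : List E}
    (h : D.IsPathIn F r v es) : D.IsPathIn G r v es :=
  ⟨h.1, fun e he => hFG (h.2.1 e he), h.2.2⟩

theorem EdgeDisjoint.nodup_flatten {F : Set E} {r v : V} {P : List (List E)}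
    (hP : ∀ p ∈ P, D.IsPathIn F r v p) (hdisj : EdgeDisjoint P) : P.flatten.Nodup :=
  List.nodup_flatten.2 ⟨fun p hp => (hP p hp).nodup, hdisj.imp fun h _ ha hb => h _ ha hb⟩

variable [Fintype E]

theorem bddAbove_lam_set {F : Set E} {r v : V} (hv : v ≠ r) :
    BddAbove {k | ∃ P : List (List E), P.length = k ∧ (∀ p ∈ P, D.IsPathIn F r v p) ∧
      EdgeDisjoint P} := by
  refine ⟨Fintype.card E, ?_⟩
  rintro _ ⟨P, rfl, hP, hdisj⟩
  have hne : ∀ p ∈ P, p ≠ [] := by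
    rintro p hp rfl
    exact hv (hP [] hp).1.symm
  calc P.length ≤ P.flatten.length := by
        have := List.length_le_sum_of_one_le (P.map List.length) fun n hn => by
          obtain ⟨p, hp, rfl⟩ := List.mem_map.1 hn
          exact List.length_pos_iff.2 (hne p hp)
        rwa [List.length_map, ← List.length_flatten] at this
    _ ≤ Fintype.card E := (EdgeDisjoint.nodup_flatten hP hdisj).length_le_card

theorem exists_paths_length_eq_lam {F : Set E} {r v : V} (hv : v ≠ r) :
    ∃ P : List (List E), P.length = D.lam F r v ∧ (∀ p ∈ P, D.IsPathIn F r v p) ∧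
      EdgeDisjoint P := by
  have hbdd := bddAbove_lam_set (D := D) (F := F) hv
  refine Nat.sSup_mem ?_ hbdd
  exact ⟨0, [], rfl, by simp, List.Pairwise.nil⟩

theorem length_le_lam {F : Set E} {r v : V} (hv : v ≠ r) {P : List (List E)}
    (hP : ∀ p ∈ P, D.IsPathIn F r v p) (hdisj : EdgeDisjoint P) :
    P.length ≤ D.lam F r v :=
  le_csSup (bddAbove_lam_set hv) ⟨P, rfl, hP, hdisj⟩

theorem lam_mono {F G : Set E} (hFG : F ⊆ G) {r v : V} (hv : v ≠ r) :
    D.lam F r v ≤ D.lam G r v := by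
  obtain ⟨P, hlen, hP, hdisj⟩ := D.exists_paths_length_eq_lam (F := F) hv
  exact hlen ▸ length_le_lam hv (fun p hp => (hP p hp).mono hFG) hdisj

end Connectivity

section Flows

variable (D)

noncomputable def incidence (e : E) (u : V) : ℤ :=
  (if D.head e = u then 1 else 0) - (if D.tail e = u then 1 else 0)

noncomputable def excess (A : Finset E) (u : V) : ℤ := ∑ e ∈ A, D.incidence e u

noncomputable def entering (A : Finset E) (u : V) : Finset E := {e ∈ A | D.head e = u}

noncomputable def leaving (A : Finset E) (u : V) : Finset E := {e ∈ A | D.tail e = u}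

/-- `A` is the edge set of a `0/1`-valued `r → v` flow inside `H`, of value
`#(D.entering A v)`; no condition is imposed at the source `r`. -/
def IsFlowSet (H : Set E) (r v : V) (A : Finset E) : Prop :=
  ↑A ⊆ H ∧ (∀ u, u ≠ r → u ≠ v → D.excess A u = 0) ∧ D.leaving A v = ∅

variable {D} {H : Set E} {r v : V}

theorem excess_eq_card_sub (A : Finset E) (u : V) :
    D.excess A u = #(D.entering A u) - #(D.leaving A u) := by
  simp only [excess, incidence, entering, leaving, natCast_card_filter, sum_sub_distrib]

theorem excess_sdiff {A B : Finset E} (hBA : B ⊆ A) (u : V) :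
    D.excess (A \ B) u = D.excess A u - D.excess B u :=
  sum_sdiff_eq_sub hBA

theorem sum_incidence_of_isWalk {x y : V} {es : List E} (h : D.IsWalk x y es) (u : V) :
    (es.map (D.incidence · u)).sum = (if y = u then 1 else 0) - (if x = u then 1 else 0) := by
  induction es generalizing x with
  | nil => simp [show x = y from h]
  | cons e es ih =>
    obtain ⟨rfl, hw⟩ := h
    rw [List.map_cons, List.sum_cons, ih hw, incidence]
    ring

theorem excess_toFinset_of_isWalk [DecidableEq E] {x y : V} {es : List E}
    (h : D.IsWalk x y es) (hnd : es.Nodup) (u : V) :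
    D.excess es.toFinset u = (if y = u then 1 else 0) - (if x = u then 1 else 0) := by
  rw [excess, List.sum_toFinset _ hnd, sum_incidence_of_isWalk h]

theorem isFlowSet_flatten (hv : v ≠ r) {P : List (List E)} (hP : ∀ p ∈ P, D.IsPathIn H r v p)
    (hdisj : EdgeDisjoint P) :
    D.IsFlowSet H r v P.flatten.toFinset ∧ #(D.entering P.flatten.toFinset v) = P.length := by
  have hexcess : ∀ u, D.excess P.flatten.toFinset u =
      P.length * ((if v = u then 1 else 0) - (if r = u then 1 else 0)) := by
    intro u
    rw [excess, List.sum_toFinset _ (EdgeDisjoint.nodup_flatten hP hdisj), List.map_flatten,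
      List.sum_flatten, List.map_map, List.map_congr_left fun p hp =>
        show (List.sum ∘ List.map (D.incidence · u)) p = _ from
          sum_incidence_of_isWalk (hP p hp).1 u]
    simp [List.map_const']
  have hflow : D.IsFlowSet H r v P.flatten.toFinset := by
    refine ⟨fun e he => ?_, fun u hur huv => by simp [hexcess, huv.symm, hur.symm], ?_⟩
    · obtain ⟨p, hp, hep⟩ := List.mem_flatten.1 (List.mem_toFinset.1 he)
      exact (hP p hp).2.1 e hep
    · refine filter_eq_empty_iff.2 fun e he => ?_
      obtain ⟨p, hp, hep⟩ := List.mem_flatten.1 (List.mem_toFinset.1 he)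
      exact (hP p hp).1.tail_ne_of_nodup (hP p hp).2.2 e hep
  refine ⟨hflow, ?_⟩
  have := hexcess v
  rw [excess_eq_card_sub, hflow.2.2, card_empty] at this
  simp [hv.symm] at this
  exact_mod_cast this

/-- Greedily follow edges of `A` out of `w`, deleting each one traversed. -/
theorem exists_isWalk_of_excess_neg {A : Finset E} (hA : ∀ u, u ≠ v → D.excess A u ≤ 0)
    {w : V} (hw : D.excess A w < 0) : ∃ es, D.IsWalk w v es ∧ ∀ e ∈ es, e ∈ A := by
  induction A using Finset.strongInduction generalizing w with
  | H A ih =>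
  obtain ⟨e, he⟩ : (D.leaving A w).Nonempty := by
    rw [← card_pos]
    have := excess_eq_card_sub (D := D) A w
    omega
  obtain ⟨heA, rfl⟩ := mem_filter.1 he
  by_cases hev : D.head e = v
  · exact ⟨[e], ⟨rfl, hev⟩, by simpa using heA⟩
  have hexc : ∀ u, D.excess (A.erase e) u = D.excess A u - D.incidence e u := fun u => by
    rw [excess, excess, ← sum_erase_add _ _ heA]
    ring
  obtain ⟨es, hes, hsub⟩ := ih (A.erase e) (erase_ssubset heA) (w := D.head e)
    (fun u hu => by
      have := hA u hu
      rw [hexc, incidence]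
      split_ifs <;> subst_vars <;> omega)
    (by
      rw [hexc, incidence, if_pos rfl]
      split_ifs with h
      · rwa [← h, sub_self, sub_zero]
      · linarith [hA _ hev])
  exact ⟨e :: es, ⟨rfl, hes⟩, by simpa [heA] using fun f hf => mem_of_mem_erase (hsub f hf)⟩

namespace IsFlowSet

variable {A : Finset E}

theorem mono {H' : Set E} (h : D.IsFlowSet H r v A) (hH : H ⊆ H') : D.IsFlowSet H' r v A :=
  ⟨h.1.trans hH, h.2⟩

theorem excess_sink (h : D.IsFlowSet H r v A) : D.excess A v = #(D.entering A v) := by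
  simp [excess_eq_card_sub, h.2.2]

theorem sdiff_path (h : D.IsFlowSet H r v A) (hv : v ≠ r) {p : List E}
    (hp : D.IsPathIn ↑A r v p) :
    D.IsFlowSet H r v (A \ p.toFinset) ∧
      #(D.entering (A \ p.toFinset) v) + 1 = #(D.entering A v) := by
  have hpA : p.toFinset ⊆ A := fun e he => hp.2.1 e (List.mem_toFinset.1 he)
  have hexc : ∀ u, D.excess (A \ p.toFinset) u =
      D.excess A u - ((if v = u then 1 else 0) - (if r = u then 1 else 0)) := fun u => by
    rw [excess_sdiff hpA, excess_toFinset_of_isWalk hp.1 hp.nodup]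
  have hflow : D.IsFlowSet H r v (A \ p.toFinset) := by
    refine ⟨(coe_subset.2 sdiff_subset).trans h.1, fun u hur huv => ?_, ?_⟩
    · simp [hexc, h.2.1 u hur huv, huv.symm, hur.symm]
    · exact subset_empty.1 (h.2.2 ▸ filter_subset_filter _ sdiff_subset)
  refine ⟨hflow, ?_⟩
  have := hexc v
  rw [hflow.excess_sink, h.excess_sink] at this
  simp [hv.symm] at this
  omega

end IsFlowSet

end Flows

section Cuts

variable [Fintype E]

variable (D) in
noncomputable def cutEdges (H : Set E) (W : Finset V) : Finset E :=
  {e | e ∈ H ∧ D.head e ∈ W ∧ D.tail e ∉ W}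

variable (D) in
/-- `ρ_H(W)`. -/
noncomputable def rho (H : Set E) (W : Finset V) : ℕ := #(D.cutEdges H W)

variable {H : Set E} {W : Finset V} {e : E}

theorem mem_cutEdges : e ∈ D.cutEdges H W ↔ e ∈ H ∧ D.head e ∈ W ∧ D.tail e ∉ W := by
  simp [cutEdges]

theorem cutEdges_sdiff_singleton : D.cutEdges (H \ {e}) W = (D.cutEdges H W).erase e := by
  ext f
  simp only [mem_cutEdges, mem_erase, Set.mem_sdiff, Set.mem_singleton_iff]
  tauto

theorem rho_sdiff_singleton_add_one (he : e ∈ D.cutEdges H W) :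
    D.rho (H \ {e}) W + 1 = D.rho H W := by
  rw [rho, rho, cutEdges_sdiff_singleton, card_erase_add_one he]

theorem rho_sdiff_singleton_of_notMem (he : e ∉ D.cutEdges H W) :
    D.rho (H \ {e}) W = D.rho H W := by
  rw [rho, rho, cutEdges_sdiff_singleton, erase_eq_of_notMem he]

variable (D) in
theorem rho_union_add_rho_inter_le (H : Set E) (W₁ W₂ : Finset V) :
    D.rho H (W₁ ∪ W₂) + D.rho H (W₁ ∩ W₂) ≤ D.rho H W₁ + D.rho H W₂ := by
  simp only [rho, cutEdges, card_filter, ← sum_add_distrib]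
  refine sum_le_sum fun e _ => ?_
  by_cases hH : e ∈ H
  · by_cases h1 : D.head e ∈ W₁ <;> by_cases h2 : D.head e ∈ W₂ <;>
      by_cases h3 : D.tail e ∈ W₁ <;> by_cases h4 : D.tail e ∈ W₂ <;>
      simp [hH, h1, h2, h3, h4]
  · simp [hH]

variable [Fintype V]

variable (D) in
theorem sum_excess (A : Finset E) (W : Finset V) :
    ∑ u ∈ W, D.excess A u = #(D.cutEdges ↑A W) - #(D.cutEdges ↑A Wᶜ) := by
  have hcut : ∀ W' : Finset V,
      D.cutEdges ↑A W' = {e ∈ A | D.head e ∈ W' ∧ D.tail e ∉ W'} := by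
    intro W'
    ext e
    simp [mem_cutEdges]
  simp only [hcut, natCast_card_filter, ← sum_sub_distrib, excess]
  rw [sum_comm]
  refine sum_congr rfl fun e _ => ?_
  by_cases hh : D.head e ∈ W <;> by_cases ht : D.tail e ∈ W <;>
    simp [incidence, sum_sub_distrib, hh, ht]

namespace IsFlowSet

variable {r v : V} {A : Finset E}

theorem excess_source (h : D.IsFlowSet H r v A) (hv : v ≠ r) :
    D.excess A r = -#(D.entering A v) := by
  have h0 : ∑ u, D.excess A u = 0 := by simp [sum_excess, cutEdges]
  rw [sum_eq_add_of_mem r v (mem_univ r) (mem_univ v) hv.symm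
    (fun u _ hu => h.2.1 u hu.1 hu.2), h.excess_sink] at h0
  linarith

theorem card_entering_add_card_cutEdges_compl (h : D.IsFlowSet H r v A)
    (hvW : v ∈ W) (hrW : r ∉ W) :
    #(D.entering A v) + #(D.cutEdges ↑A Wᶜ) = #(D.cutEdges ↑A W) := by
  have hW : ∑ u ∈ W, D.excess A u = D.excess A v :=
    sum_eq_single_of_mem v hvW fun u hu huv => h.2.1 u (ne_of_mem_of_not_mem hu hrW) huv
  have := D.sum_excess A W
  rw [hW, h.excess_sink] at this
  omega

theorem card_entering_le_rho (h : D.IsFlowSet H r v A) (hvW : v ∈ W) (hrW : r ∉ W) :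
    #(D.entering A v) ≤ D.rho H W := by
  have hsub : D.cutEdges ↑A W ⊆ D.cutEdges H W := fun e he => by
    rw [mem_cutEdges] at he ⊢
    exact ⟨h.1 he.1, he.2⟩
  have := h.card_entering_add_card_cutEdges_compl hvW hrW
  have := card_le_card hsub
  rw [rho]
  omega

end IsFlowSet

end Cuts

section PathSystems

variable [Fintype E] {H : Set E} {r v : V}

variable (D) in
theorem exists_isFlowSet_card_eq_lam (hv : v ≠ r) :
    ∃ A, D.IsFlowSet H r v A ∧ #(D.entering A v) = D.lam H r v := by
  obtain ⟨P, hlen, hP, hdisj⟩ := D.exists_paths_length_eq_lam (F := H) hv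
  exact ⟨_, (isFlowSet_flatten hv hP hdisj).1, (isFlowSet_flatten hv hP hdisj).2.trans hlen⟩

variable [Fintype V]

namespace IsFlowSet

variable {A : Finset E}

theorem exists_paths (h : D.IsFlowSet H r v A) (hv : v ≠ r) :
    ∃ P : List (List E), P.length = #(D.entering A v) ∧ (∀ p ∈ P, D.IsPathIn ↑A r v p) ∧
      EdgeDisjoint P := by
  induction A using Finset.strongInduction with
  | H A ih =>
  rcases Nat.eq_zero_or_pos #(D.entering A v) with h0 | hpos
  · exact ⟨[], h0.symm, by simp, .nil⟩
  have hr : D.excess A r < 0 := by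
    rw [h.excess_source hv]
    omega
  have hle : ∀ u, u ≠ v → D.excess A u ≤ 0 := fun u hu => by
    by_cases hur : u = r
    · exact hur ▸ hr.le
    · exact (h.2.1 u hur hu).le
  obtain ⟨es, hes, hesA⟩ := exists_isWalk_of_excess_neg hle hr
  obtain ⟨p, hp, hpes, hpnd⟩ := exists_path_of_isWalk hes
  have hpath : D.IsPathIn ↑A r v p := ⟨hp, fun e he => hesA e (hpes he), hpnd⟩
  have hpA : p.toFinset ⊆ A := fun e he => hpath.2.1 e (List.mem_toFinset.1 he)
  have hpne : p.toFinset.Nonempty := by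
    rw [List.toFinset_nonempty_iff]
    rintro rfl
    exact hv hp.symm
  obtain ⟨hflow', hval'⟩ := h.sdiff_path hv hpath
  obtain ⟨P, hlen, hP, hdisj⟩ := ih _ (sdiff_ssubset hpA hpne) hflow'
  refine ⟨p :: P, by simp [hlen, ← hval'], ?_, ?_⟩
  · simp only [List.mem_cons, forall_eq_or_imp]
    exact ⟨hpath, fun q hq => (hP q hq).mono (coe_subset.2 sdiff_subset)⟩
  · refine List.Pairwise.cons (fun q hq e hep heq => ?_) hdisj
    exact (mem_sdiff.1 ((hP q hq).2.1 e heq)).2 (List.mem_toFinset.2 hep)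

theorem card_entering_le_lam (h : D.IsFlowSet H r v A) (hv : v ≠ r) :
    #(D.entering A v) ≤ D.lam H r v := by
  obtain ⟨P, hlen, hP, hdisj⟩ := h.exists_paths hv
  exact hlen ▸ length_le_lam hv (fun p hp => (hP p hp).mono h.1) hdisj

end IsFlowSet

variable (D) in
theorem lam_le_rho (hv : v ≠ r) {W : Finset V} (hvW : v ∈ W) (hrW : r ∉ W) :
    D.lam H r v ≤ D.rho H W := by
  obtain ⟨A, hA, hval⟩ := D.exists_isFlowSet_card_eq_lam (H := H) hv
  exact hval ▸ hA.card_entering_le_rho hvW hrW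

end PathSystems

section Residual

variable (D)

def resid : Digraph' V (E × Bool) where
  tail s := if s.2 then D.tail s.1 else D.head s.1
  head s := if s.2 then D.head s.1 else D.tail s.1

def residual (H : Set E) (A : Finset E) : Set (E × Bool) :=
  {s | if s.2 then s.1 ∈ H ∧ s.1 ∉ A else s.1 ∈ A}

def Reach (H : Set E) (A : Finset E) (x y : V) : Prop :=
  ∃ es, D.resid.IsWalk x y es ∧ ∀ s ∈ es, s ∈ residual H A

noncomputable def augment [Fintype E] (A : Finset E) (es : List (E × Bool)) : Finset E :=
  {e | (e, true) ∈ es ∨ (e ∈ A ∧ (e, false) ∉ es)}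

variable {D} {H : Set E} {A : Finset E}

theorem Reach.refl (x : V) : D.Reach H A x x := ⟨[], rfl, by simp⟩

theorem Reach.step {x : V} {s : E × Bool} (h : D.Reach H A x (D.resid.tail s))
    (hs : s ∈ residual H A) : D.Reach H A x (D.resid.head s) := by
  obtain ⟨es, hes, hres⟩ := h
  exact ⟨es ++ [s], hes.snoc rfl, fun t ht =>
    (List.mem_append.1 ht).elim (hres t) fun h => List.mem_singleton.1 h ▸ hs⟩

theorem resid_incidence (e : E) (b : Bool) (u : V) :
    D.resid.incidence (e, b) u = if b then D.incidence e u else -D.incidence e u := by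
  cases b <;> simp [incidence, resid]

theorem excess_augment [Fintype E] {es : List (E × Bool)} (hes : ∀ s ∈ es, s ∈ residual H A)
    (u : V) : D.excess (augment A es) u = D.excess A u + D.resid.excess es.toFinset u := by
  have hsum : ∀ X : Finset E, D.excess X u = ∑ e, if e ∈ X then D.incidence e u else 0 :=
    fun X => by rw [excess, sum_ite_mem, univ_inter]
  rw [hsum, hsum, excess, ← univ_inter es.toFinset, ← sum_ite_mem, Fintype.sum_prod_type,
    ← sum_add_distrib]
  refine sum_congr rfl fun e _ => ?_
  have hT : (e, true) ∈ es → e ∉ A := fun h => (hes _ h).2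
  have hF : (e, false) ∈ es → e ∈ A := fun h => hes _ h
  simp only [Fintype.sum_bool, resid_incidence, List.mem_toFinset, augment, mem_filter, mem_univ,
    true_and]
  by_cases h1 : (e, true) ∈ es <;> by_cases h2 : (e, false) ∈ es <;> by_cases h3 : e ∈ A <;>
    simp_all

theorem IsFlowSet.exists_augment [Fintype E] {r v : V} (h : D.IsFlowSet H r v A) (hv : v ≠ r)
    (hreach : D.Reach H A r v) :
    ∃ A', D.IsFlowSet H r v A' ∧ #(D.entering A' v) = #(D.entering A v) + 1 ∧
      D.entering A v ⊆ D.entering A' v := by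
  obtain ⟨es₀, hes₀, hres₀⟩ := hreach
  obtain ⟨es, hes, hsub, hnd⟩ := exists_path_of_isWalk hes₀
  have hres : ∀ s ∈ es, s ∈ residual H A := fun s hs => hres₀ s (hsub hs)
  have hleave : ∀ s ∈ es, D.resid.tail s ≠ v := hes.tail_ne_of_nodup hnd
  have hexc : ∀ u, D.excess (augment A es) u =
      D.excess A u + ((if v = u then 1 else 0) - (if r = u then 1 else 0)) := fun u => by
    rw [excess_augment hres, excess_toFinset_of_isWalk hes (hnd.of_cons.of_map _)]
  have hkeep : D.entering A v ⊆ D.entering (augment A es) v := by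
    intro e he
    obtain ⟨heA, rfl⟩ := mem_filter.1 he
    refine mem_filter.2 ⟨mem_filter.2 ⟨mem_univ _, Or.inr ⟨heA, fun hes' => ?_⟩⟩, rfl⟩
    exact hleave _ hes' rfl
  have hflow : D.IsFlowSet H r v (augment A es) := by
    refine ⟨fun e he => ?_, fun u hur huv => ?_, ?_⟩
    · rcases (mem_filter.1 he).2 with he | ⟨heA, -⟩
      · exact (hres _ he).1
      · exact h.1 heA
    · simp [hexc, h.2.1 u hur huv, huv.symm, hur.symm]
    · refine filter_eq_empty_iff.2 fun e he htail => ?_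
      rcases (mem_filter.1 he).2 with he | ⟨heA, -⟩
      · exact hleave _ he htail
      · exact (filter_eq_empty_iff.1 h.2.2) heA htail
  refine ⟨augment A es, hflow, ?_, hkeep⟩
  have := hexc v
  rw [hflow.excess_sink, h.excess_sink] at this
  simp [hv.symm] at this
  exact_mod_cast this

end Residual

section Menger

variable [Fintype V] [Fintype E] {H : Set E} {r v : V}

namespace IsFlowSet

variable {A : Finset E}

theorem exists_rho_eq_of_not_reach (h : D.IsFlowSet H r v A) (hreach : ¬D.Reach H A r v) :
    ∃ W : Finset V, v ∈ W ∧ r ∉ W ∧ D.rho H W = #(D.entering A v) := by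
  set W : Finset V := {u | ¬D.Reach H A r u}
  have hW : ∀ u, u ∈ W ↔ ¬D.Reach H A r u := by simp [W]
  have hvW : v ∈ W := (hW v).2 hreach
  have hrW : r ∉ W := fun hr => (hW r).1 hr (Reach.refl r)
  have hin : D.cutEdges H W = D.cutEdges ↑A W := by
    ext e
    simp only [mem_cutEdges, hW, not_not, mem_coe]
    constructor
    · rintro ⟨heH, hhead, htail⟩
      exact ⟨by_contra fun heA => hhead (htail.step (s := (e, true)) ⟨heH, heA⟩), hhead, htail⟩
    · rintro ⟨heA, hhead, htail⟩
      exact ⟨h.1 heA, hhead, htail⟩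
  have hout : D.cutEdges ↑A Wᶜ = ∅ := by
    refine eq_empty_of_forall_notMem fun e he => ?_
    simp only [mem_cutEdges, mem_compl, hW, not_not, mem_coe] at he
    exact he.2.2 (he.2.1.step (s := (e, false)) he.1)
  have := h.card_entering_add_card_cutEdges_compl hvW hrW
  rw [hout, card_empty, add_zero, ← hin] at this
  exact ⟨W, hvW, hrW, this.symm⟩

theorem exists_card_entering_eq_lam (h : D.IsFlowSet H r v A) (hv : v ≠ r) :
    ∃ A', D.IsFlowSet H r v A' ∧ #(D.entering A' v) = D.lam H r v ∧
      D.entering A v ⊆ D.entering A' v := by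
  obtain ⟨n, hn⟩ := Nat.exists_eq_add_of_le (h.card_entering_le_lam hv)
  induction n generalizing A with
  | zero => exact ⟨A, h, hn.symm, subset_rfl⟩
  | succ n ih =>
    have hreach : D.Reach H A r v := by
      by_contra hreach
      obtain ⟨W, hvW, hrW, hW⟩ := h.exists_rho_eq_of_not_reach hreach
      have := D.lam_le_rho (H := H) hv hvW hrW
      omega
    obtain ⟨A₁, h₁, hval₁, hsub₁⟩ := h.exists_augment hv hreach
    obtain ⟨A', h', hval', hsub'⟩ := ih h₁ (by omega)
    exact ⟨A', h', hval', hsub₁.trans hsub'⟩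

end IsFlowSet

variable (D) in
theorem exists_rho_eq_lam (hv : v ≠ r) :
    ∃ W : Finset V, v ∈ W ∧ r ∉ W ∧ D.rho H W = D.lam H r v := by
  obtain ⟨A, hA, hval⟩ := D.exists_isFlowSet_card_eq_lam (H := H) hv
  have hreach : ¬D.Reach H A r v := fun hreach => by
    obtain ⟨A', hA', hval', -⟩ := hA.exists_augment hv hreach
    have := hA'.card_entering_le_lam hv
    omega
  obtain ⟨W, hvW, hrW, hW⟩ := hA.exists_rho_eq_of_not_reach hreach
  exact ⟨W, hvW, hrW, hW.trans hval⟩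

/-- Lovász's deletion lemma. -/
theorem lam_sdiff_singleton_eq {G : Set E} {e : E} (he : e ∈ G) (het : D.head e ≠ r)
    (hlam : D.lam (G \ {e}) r (D.head e) = D.lam G r (D.head e)) {u : V} (hu : u ≠ r) :
    D.lam (G \ {e}) r u = D.lam G r u := by
  refine le_antisymm (lam_mono Set.sdiff_subset hu) ?_
  obtain ⟨W, huW, hrW, hW⟩ := D.exists_rho_eq_lam (H := G \ {e}) hu
  by_cases heW : e ∈ D.cutEdges G W
  swap
  · calc D.lam G r u ≤ D.rho G W := D.lam_le_rho hu huW hrW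
      _ = D.rho (G \ {e}) W := (rho_sdiff_singleton_of_notMem heW).symm
      _ = D.lam (G \ {e}) r u := hW
  -- uncross `W` with a minimum cut `T` separating `head e` from `r` in `G`
  obtain ⟨-, htW, htailW⟩ := mem_cutEdges.1 heW
  obtain ⟨T, htT, hrT, hT⟩ := D.exists_rho_eq_lam (H := G) het
  have heTW : e ∈ D.cutEdges G (T ∩ W) :=
    mem_cutEdges.2 ⟨he, mem_inter.2 ⟨htT, htW⟩, fun h => htailW (mem_inter.1 h).2⟩
  have hTW := D.lam_le_rho (H := G \ {e}) het (mem_inter.2 ⟨htT, htW⟩)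
    (fun h => hrT (mem_inter.1 h).1)
  have hTuW := D.lam_le_rho (H := G) hu (mem_union_right T huW) (by simp [hrT, hrW])
  have := rho_sdiff_singleton_add_one heTW
  have := rho_sdiff_singleton_add_one heW
  have := D.rho_union_add_rho_inter_le G T W
  omega

end Menger

section Flames

variable [Fintype E] {F G : Set E} {r t : V}

theorem IsFlame.exists_isFlowSet_inEdges_subset (hF : D.IsFlame r F) (ht : t ≠ r) :
    ∃ A, D.IsFlowSet F r t A ∧ D.inEdges F t ⊆ D.entering A t := by
  obtain ⟨A, hA, hval⟩ := D.exists_isFlowSet_card_eq_lam (H := F) ht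
  have hsub : (D.entering A t : Set E) ⊆ D.inEdges F t := fun e he => by
    obtain ⟨heA, rfl⟩ := mem_filter.1 he
    exact ⟨hA.1 heA, rfl⟩
  refine ⟨A, hA, (Set.eq_of_subset_of_ncard_le hsub ?_).symm.subset⟩
  rw [Set.ncard_coe_finset, hval, ← hF t ht, indeg]

variable [Fintype V]

theorem IsFlowSet.lam_sdiff_singleton_eq {A : Finset E} (hA : D.IsFlowSet G r t A)
    (hval : #(D.entering A t) = D.lam G r t) (ht : t ≠ r) {e : E} (heA : e ∉ A) :
    D.lam (G \ {e}) r t = D.lam G r t := by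
  have hA' : D.IsFlowSet (G \ {e}) r t A :=
    ⟨fun f hf => ⟨hA.1 hf, fun hfe => heA (hfe ▸ hf)⟩, hA.2⟩
  exact le_antisymm (lam_mono Set.sdiff_subset ht) (hval ▸ hA'.card_entering_le_lam ht)

theorem IsFlame.superset_of_lam_sdiff_singleton_ne (hF : D.IsFlame r F) (hFG : F ⊆ G)
    (hcrit : ∀ e ∈ G, e ∉ F → D.lam (G \ {e}) r (D.head e) ≠ D.lam G r (D.head e)) :
    D.IsFlame r G := by
  intro t ht
  obtain ⟨A₀, hA₀, hF₀⟩ := hF.exists_isFlowSet_inEdges_subset ht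
  obtain ⟨A, hA, hval, hA₀A⟩ := (hA₀.mono hFG).exists_card_entering_eq_lam ht
  have hin : D.inEdges G t = D.entering A t := by
    ext e
    refine ⟨fun ⟨heG, het⟩ => ?_, fun he => ?_⟩
    · by_contra hent
      have heA : e ∉ A := fun heA => hent (mem_filter.2 ⟨heA, het⟩)
      by_cases heF : e ∈ F
      · exact heA (mem_filter.1 (hA₀A (hF₀ ⟨heF, het⟩))).1
      · exact hcrit e heG heF (het ▸ hA.lam_sdiff_singleton_eq hval ht heA)
    · obtain ⟨heA, het⟩ := mem_filter.1 he
      exact ⟨hA.1 heA, het⟩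
  rw [indeg, hin, Set.ncard_coe_finset, hval]

theorem IsFlame.exists_superset_lam_eq (hr : ∀ e, D.head e ≠ r) (hF : D.IsFlame r F)
    (hFG : F ⊆ G) :
    ∃ G', F ⊆ G' ∧ D.IsFlame r G' ∧ ∀ u, u ≠ r → D.lam G' r u = D.lam G r u := by
  set S := {G' | F ⊆ G' ∧ ∀ u, u ≠ r → D.lam G' r u = D.lam G r u}
  obtain ⟨G', hmin⟩ := S.toFinite.exists_minimal ⟨G, hFG, fun _ _ => rfl⟩
  obtain ⟨hFG', hlam⟩ := hmin.prop
  refine ⟨G', hFG', hF.superset_of_lam_sdiff_singleton_ne hFG' fun e he heF hdel => ?_, hlam⟩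
  have hsmaller : G' \ {e} ∈ S :=
    ⟨fun f hf => ⟨hFG' hf, fun hfe => heF (hfe ▸ hf)⟩,
      fun u hu => (lam_sdiff_singleton_eq he (hr e) hdel hu).trans (hlam u hu)⟩
  exact (hmin.2 hsmaller Set.sdiff_subset he).2 rfl

end Flames

end Digraph'

open Digraph' in
/-- Every ⊆-maximal `r`-flame subgraph preserves all local edge-connectivities
from `r`. -/
theorem stmt2 {V E : Type} [Fintype V] [Fintype E] (D : Digraph' V E) (r : V)
    (hr : ∀ e, D.head e ≠ r) (F : Set E) (hF : D.IsFlame r F)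
    (hmax : ∀ F' : Set E, D.IsFlame r F' → F ⊆ F' → F' = F) :
    ∀ v, v ≠ r → D.lam F r v = D.lam Set.univ r v := by
  intro v hv
  obtain ⟨G, hFG, hG, hlam⟩ := hF.exists_superset_lam_eq hr (Set.subset_univ F)
  rw [← hlam v hv, hmax G hG hFG]
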